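/- arXiv:2410.13808 — 5 statements merged into one kernel-verified Lean document; each statement's English description precedes it below -/
import Mathlib

section
/- Let δ ∈ ℝ. Define the watermarked selection probabilities P_W^i(ω) = (1/2 + ε(ω))·e^δ / ((1/2 + ε(ω))·e^δ + (1/2 − ε(ω))) and P_W^j(ω) = (1/2 − ε(ω)) / ((1/2 + ε(ω))·e^δ + (1/2 − ε(ω))). Then E_μ[log(P_W^i / P_W^j)] = δ; i.e., the relative probability ratio R = log(P_W^i / P_W^j) is an unbiased estimator of the watermark strength δ when token T_i is in the green list and token T_j is in the red list. -/
open MeasureTheory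

/-! The watermark multiplies the odds of the green token by `e^δ` and the common normalisation
cancels in the ratio, so `R = δ + log ((1/2 + ε) / (1/2 - ε))`. The second term is an odd function
of `ε`, and the symmetry of the law of `ε` makes its expectation vanish. -/

theorem integral_comp_eq_zero_of_map_eq_map_neg {Ω E F : Type*} [MeasurableSpace Ω]
    [MeasurableSpace E] [Neg E] [MeasurableNeg E] [NormedAddCommGroup F] [NormedSpace ℝ F]
    {μ : Measure Ω} {X : Ω → E} (hX : AEMeasurable X μ)
    (hsym : μ.map X = μ.map (fun ω => -X ω)) {g : E → F}
    (hg : AEStronglyMeasurable g (μ.map X)) (hodd : ∀ x, g (-x) = -g x) :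
    ∫ ω, g (X ω) ∂μ = 0 := by
  have hg' : AEStronglyMeasurable g (μ.map fun ω => -X ω) := hsym ▸ hg
  have hneg : ∫ ω, g (X ω) ∂μ = -∫ ω, g (X ω) ∂μ :=
    calc ∫ ω, g (X ω) ∂μ = ∫ x, g x ∂(μ.map X) := (integral_map hX hg).symm
      _ = ∫ x, g x ∂(μ.map fun ω => -X ω) := by rw [hsym]
      _ = ∫ ω, g (-X ω) ∂μ := integral_map hX.neg hg'
      _ = -∫ ω, g (X ω) ∂μ := by simp only [hodd, integral_neg]
  have htwice : (2 : ℝ) • ∫ ω, g (X ω) ∂μ = 0 := by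
    rw [two_smul]
    nth_rewrite 2 [hneg]
    exact add_neg_cancel _
  simpa using htwice

theorem Real.log_add_neg_div_sub_neg (a x : ℝ) :
    Real.log ((a + -x) / (a - -x)) = -Real.log ((a + x) / (a - x)) := by
  rw [← Real.log_inv, inv_div, sub_neg_eq_add, ← sub_eq_add_neg]

theorem Real.log_div_of_mul_exp_div (p q δ : ℝ) (hp : 0 < p) (hq : 0 < q) :
    Real.log (p * Real.exp δ / (p * Real.exp δ + q) / (q / (p * Real.exp δ + q)))
      = δ + Real.log (p / q) := by
  have hD : p * Real.exp δ + q ≠ 0 := by positivity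
  rw [div_div_div_cancel_right₀ hD, mul_comm, mul_div_assoc,
    Real.log_mul (Real.exp_pos δ).ne' (div_pos hp hq).ne', Real.log_exp]

/-- The relative probability ratio is an unbiased estimator of the watermark
strength `δ` when `T_i` is green and `T_j` is red. -/
theorem unbiased_estimator_of_delta
    {Ω : Type*} [MeasurableSpace Ω] (μ : Measure Ω) [IsProbabilityMeasure μ]
    (ε : Ω → ℝ) (hmeas : Measurable ε)
    (hbound : ∀ᵐ ω ∂μ, |ε ω| < 1/2)
    (hsym : Measure.map ε μ = Measure.map (fun ω => -ε ω) μ)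
    (hint : Integrable (fun ω => Real.log ((1/2 + ε ω) / (1/2 - ε ω))) μ)
    (δ : ℝ) :
    ∫ ω, Real.log
        (((1/2 + ε ω) * Real.exp δ / ((1/2 + ε ω) * Real.exp δ + (1/2 - ε ω)))
          / ((1/2 - ε ω) / ((1/2 + ε ω) * Real.exp δ + (1/2 - ε ω)))) ∂μ = δ := by
  have hratio : ∀ᵐ ω ∂μ, Real.log
      (((1/2 + ε ω) * Real.exp δ / ((1/2 + ε ω) * Real.exp δ + (1/2 - ε ω)))
        / ((1/2 - ε ω) / ((1/2 + ε ω) * Real.exp δ + (1/2 - ε ω))))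
      = δ + Real.log ((1/2 + ε ω) / (1/2 - ε ω)) := by
    filter_upwards [hbound] with ω hω
    obtain ⟨hlo, hhi⟩ := abs_lt.mp hω
    exact Real.log_div_of_mul_exp_div _ _ δ (by linarith) (by linarith)
  have hlog_odds : ∫ ω, Real.log ((1/2 + ε ω) / (1/2 - ε ω)) ∂μ = 0 :=
    integral_comp_eq_zero_of_map_eq_map_neg (g := fun x => Real.log ((1/2 + x) / (1/2 - x)))
      hmeas.aemeasurable hsym (by fun_prop : Measurable _).aestronglyMeasurable (Real.log_add_neg_div_sub_neg _)
  rw [integral_congr_ae hratio, integral_add (integrable_const δ) hint, hlog_odds]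
  simp
end

section
/- Assume the misclassified probability mass satisfies Σ_{t∈R̂∩G} P(t) + Σ_{t∈Ĝ∩R} P(t) ≤ ε₁ with 0 ≤ ε₁ ≤ 1, and |δ − δ̂| ≤ ε₂ with ε₂ ≥ 0. Then A ≤ e^{ε₂}·(1 − ε₁) + e^{δ}·ε₁. -/
open Finset

/-!
Split the mass of `P` into the four cells cut out by `Ĝ` and `G`. With `k = min ε₂ δ`, the
weights `1` and `e^{δ - δ̂}` of the correctly classified cells are at most `e^k`, while the weights
`e^δ` and `e^{-δ̂}` of the misclassified cells are at most `e^δ ≥ e^k`. So `A` is at most the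
mixture `e^k (1 - m) + e^δ m` of the misclassified mass `m ≤ ε₁`, which increases with `m`.
-/

theorem Finset.sum_inter_add_sum_inter_compl {ι M : Type*} [Fintype ι] [DecidableEq ι]
    [AddCommMonoid M] (s t : Finset ι) (f : ι → M) :
    ∑ i ∈ s ∩ t, f i + ∑ i ∈ s ∩ tᶜ, f i = ∑ i ∈ s, f i := by
  rw [← sdiff_eq_inter_compl, sum_inter_add_sum_sdiff]

theorem mix_le_mix_of_le {L H p q ε : ℝ} (hLH : L ≤ H) (hpq : p + q = 1) (hq : q ≤ ε) :
    L * p + H * q ≤ L * (1 - ε) + H * ε := by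
  obtain rfl : p = 1 - q := by linarith
  nlinarith [mul_le_mul_of_nonneg_left hq (sub_nonneg.2 hLH)]

theorem A_upper_bound_general
    {V : Type*} [Fintype V] [DecidableEq V]
    (P : V → ℝ) (G Ghat : Finset V) (δ δhat : ℝ)
    (hP0 : ∀ t, 0 ≤ P t) (hP1 : ∑ t, P t = 1) (hδ : 0 < δ) (hδhat : 0 < δhat)
    (A : ℝ)
    (hA : A = ∑ t ∈ Ghatᶜ ∩ Gᶜ, P t + Real.exp δ * ∑ t ∈ Ghatᶜ ∩ G, P t
        + Real.exp (-δhat) * ∑ t ∈ Ghat ∩ Gᶜ, P t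
        + Real.exp (δ - δhat) * ∑ t ∈ Ghat ∩ G, P t)
    (ε₁ ε₂ : ℝ) (hε₁1 : ε₁ ≤ 1) (hε₂0 : 0 ≤ ε₂)
    (hmis : ∑ t ∈ Ghatᶜ ∩ G, P t + ∑ t ∈ Ghat ∩ Gᶜ, P t ≤ ε₁)
    (hδδ : |δ - δhat| ≤ ε₂) :
    A ≤ Real.exp ε₂ * (1 - ε₁) + Real.exp δ * ε₁ := by
  set a := ∑ t ∈ Ghatᶜ ∩ Gᶜ, P t
  set b := ∑ t ∈ Ghatᶜ ∩ G, P t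
  set c := ∑ t ∈ Ghat ∩ Gᶜ, P t
  set d := ∑ t ∈ Ghat ∩ G, P t
  have hmass : (a + d) + (b + c) = 1 := by
    rw [← hP1, ← sum_add_sum_compl Ghat, ← sum_inter_add_sum_inter_compl Ghat G,
      ← sum_inter_add_sum_inter_compl Ghatᶜ G]
    ring
  set k := min ε₂ δ
  have hk : δ - δhat ≤ k := le_min (le_of_abs_le hδδ) (by linarith)
  have h_one : 1 ≤ Real.exp k := Real.one_le_exp (le_min hε₂0 hδ.le)
  have h_neg : Real.exp (-δhat) ≤ Real.exp δ := Real.exp_le_exp.2 (by linarith)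
  have h_diff : Real.exp (δ - δhat) ≤ Real.exp k := Real.exp_le_exp.2 hk
  have hA_le : A ≤ Real.exp k * (a + d) + Real.exp δ * (b + c) := by
    have hc := mul_le_mul_of_nonneg_right h_neg (sum_nonneg fun t _ => hP0 t : 0 ≤ c)
    have hd := mul_le_mul_of_nonneg_right h_diff (sum_nonneg fun t _ => hP0 t : 0 ≤ d)
    have ha := le_mul_of_one_le_left (sum_nonneg fun t _ => hP0 t : 0 ≤ a) h_one
    rw [hA]
    linarith
  calc A ≤ Real.exp k * (1 - ε₁) + Real.exp δ * ε₁ :=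
        hA_le.trans (mix_le_mix_of_le (Real.exp_le_exp.2 (min_le_right _ _)) hmass hmis)
    _ ≤ Real.exp ε₂ * (1 - ε₁) + Real.exp δ * ε₁ := by
        gcongr
        exact min_le_left _ _

/-- Upper bound on the normalizer `A` of the post-removal distribution. -/
theorem A_upper_bound
    {V : Type*} [Fintype V] [DecidableEq V]
    (P : V → ℝ) (G Ghat : Finset V) (δ δhat : ℝ)
    (hP0 : ∀ t, 0 ≤ P t) (hP1 : ∑ t, P t = 1) (hδ : 0 < δ) (hδhat : 0 < δhat)
    (A : ℝ)
    (hA : A = ∑ t ∈ Ghatᶜ ∩ Gᶜ, P t + Real.exp δ * ∑ t ∈ Ghatᶜ ∩ G, P t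
        + Real.exp (-δhat) * ∑ t ∈ Ghat ∩ Gᶜ, P t
        + Real.exp (δ - δhat) * ∑ t ∈ Ghat ∩ G, P t)
    (ε₁ ε₂ : ℝ) (hε₁0 : 0 ≤ ε₁) (hε₁1 : ε₁ ≤ 1) (hε₂0 : 0 ≤ ε₂)
    (hmis : ∑ t ∈ Ghatᶜ ∩ G, P t + ∑ t ∈ Ghat ∩ Gᶜ, P t ≤ ε₁)
    (hδδ : |δ - δhat| ≤ ε₂) :
    A ≤ Real.exp ε₂ * (1 - ε₁) + Real.exp δ * ε₁ :=
  A_upper_bound_general P G Ghat δ δhat hP0 hP1 hδ hδhat A hA ε₁ ε₂ hε₁1 hε₂0 hmis hδδ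
end

section
/- Assume the misclassified probability mass satisfies Σ_{t∈R̂∩G} P(t) + Σ_{t∈Ĝ∩R} P(t) ≤ ε₁ with 0 ≤ ε₁ < 1, and |δ − δ̂| ≤ ε₂ with ε₂ ≥ 0. Then max{ |1/A − 1| , |e^{δ−δ̂}/A − 1| } ≤ f₁(ε₁, ε₂). -/
/-!
The normalizer `A` mixes the masses of the four cells `R̂ ∩ R, R̂ ∩ G, Ĝ ∩ R, Ĝ ∩ G`. On the
correctly classified cells, of mass at least `1 - ε₁`, its weights `1` and `e^{δ-δ̂}` lie in
`[e^{-ε₂}, e^{ε₂}]`; on the misclassified ones, of mass at most `ε₁`, they lie in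
`[0, e^{min(δ,δ̂)+ε₂}]`. This places `A` in `[e^{-2ε₂}(1-ε₁), e^{2ε₂}((1-ε₁) + ε₁e^{δ-ε₂})]`, whose
endpoints control `|1/A - 1|`. Exchanging `δ` and `δ̂` together with the two correctly classified
cells turns `A` into `A / e^{δ-δ̂}`, so the same bound holds for `|e^{δ-δ̂}/A - 1|`.
-/

open Finset Real

theorem abs_one_div_sub_one_le {L B U : ℝ} (hL : 0 < L) (hLB : L ≤ B) (hBU : B ≤ U) :
    |1 / B - 1| ≤ max (1 / L - 1) (1 - 1 / U) := by
  have hB : 0 < B := hL.trans_le hLB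
  have h₁ : 1 / B ≤ 1 / L := one_div_le_one_div_of_le hL hLB
  have h₂ : 1 / U ≤ 1 / B := one_div_le_one_div_of_le hB hBU
  rw [abs_le]
  constructor <;> linarith [le_max_left (1 / L - 1) (1 - 1 / U),
    le_max_right (1 / L - 1) (1 - 1 / U)]

theorem abs_one_div_sub_one_le_of_exp_bounds {δ m ε₁ ε₂ B : ℝ} (hε₁0 : 0 ≤ ε₁) (hε₁1 : ε₁ < 1)
    (hε₂ : 0 ≤ ε₂) (hm : m ≤ δ) (hlo : exp (-ε₂) * (1 - ε₁) ≤ B)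
    (hhi : B ≤ exp ε₂ * (1 - ε₁) + exp (m + ε₂) * ε₁) :
    |1 / B - 1| ≤ max (exp (2 * ε₂) / (1 - ε₁) - 1)
      (1 - exp (-(2 * ε₂)) / ((1 - ε₁) + ε₁ * exp (δ - ε₂))) := by
  rw [← one_div_div (1 - ε₁), ← one_div_div ((1 - ε₁) + ε₁ * exp (δ - ε₂))]
  refine abs_one_div_sub_one_le (div_pos (sub_pos.mpr hε₁1) (exp_pos _)) (le_trans ?_ hlo)
    (hhi.trans ?_)
  · rw [div_eq_mul_inv, ← exp_neg, mul_comm]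
    gcongr
    linarith
  · have hexp : exp (δ - ε₂) * exp (2 * ε₂) = exp (δ + ε₂) := by
      rw [← exp_add]
      ring_nf
    calc exp ε₂ * (1 - ε₁) + exp (m + ε₂) * ε₁
        ≤ exp (2 * ε₂) * (1 - ε₁) + exp (δ + ε₂) * ε₁ := by
          gcongr
          linarith
      _ = ((1 - ε₁) + ε₁ * exp (δ - ε₂)) / exp (-(2 * ε₂)) := by
        rw [div_eq_mul_inv, ← exp_neg, neg_neg, ← hexp]
        ring

theorem Finset.sum_compl_inter_add_sum_inter {ι M : Type*} [Fintype ι] [DecidableEq ι]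
    [AddCommMonoid M] (s t : Finset ι) (f : ι → M) :
    ∑ i ∈ sᶜ ∩ tᶜ, f i + ∑ i ∈ sᶜ ∩ t, f i + ∑ i ∈ s ∩ tᶜ, f i + ∑ i ∈ s ∩ t, f i
      = ∑ i, f i := by
  rw [← sum_compl_add_sum s f, ← sum_inter_add_sum_sdiff sᶜ t f, ← sum_inter_add_sum_sdiff s t f,
    sdiff_eq_inter_compl, sdiff_eq_inter_compl]
  abel

/-- `a, b, c, d` are the masses of the cells `R̂ ∩ R, R̂ ∩ G, Ĝ ∩ R, Ĝ ∩ G`. -/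
noncomputable def watermarkNormalizer (δ δhat a b c d : ℝ) : ℝ :=
  a + exp δ * b + exp (-δhat) * c + exp (δ - δhat) * d

theorem watermarkNormalizer_div_exp (δ δhat a b c d : ℝ) :
    watermarkNormalizer δ δhat a b c d / exp (δ - δhat) = watermarkNormalizer δhat δ d b c a := by
  simp only [watermarkNormalizer, exp_sub, exp_neg]
  field_simp
  ring

section bounds

variable {δ δhat a b c d ε₁ ε₂ : ℝ} (ha : 0 ≤ a) (hb : 0 ≤ b) (hc : 0 ≤ c) (hd : 0 ≤ d)
  (hsum : a + b + c + d = 1) (hmis : b + c ≤ ε₁) (hdev : |δ - δhat| ≤ ε₂)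
include ha hb hc hd hsum hmis hdev

theorem exp_neg_mul_le_watermarkNormalizer :
    exp (-ε₂) * (1 - ε₁) ≤ watermarkNormalizer δ δhat a b c d := by
  have hε₂ : 0 ≤ ε₂ := (abs_nonneg _).trans hdev
  have ha' : exp (-ε₂) * a ≤ a := mul_le_of_le_one_left ha (exp_le_one_iff.mpr (by linarith))
  have hd' : exp (-ε₂) * d ≤ exp (δ - δhat) * d := by
    gcongr
    linarith [neg_abs_le (δ - δhat)]
  have hb' : 0 ≤ exp δ * b := by positivity
  have hc' : 0 ≤ exp (-δhat) * c := by positivity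
  have hcorrect : exp (-ε₂) * (1 - ε₁) ≤ exp (-ε₂) * (a + d) := by
    gcongr
    linarith
  unfold watermarkNormalizer
  linarith

theorem watermarkNormalizer_le (hδ : 0 ≤ δ) (hδhat : 0 ≤ δhat) :
    watermarkNormalizer δ δhat a b c d ≤ exp ε₂ * (1 - ε₁) + exp (min δ δhat + ε₂) * ε₁ := by
  obtain ⟨hge, hle⟩ := abs_le.mp hdev
  have hε₂ : 0 ≤ ε₂ := (abs_nonneg _).trans hdev
  have hmin : δ - ε₂ ≤ min δ δhat := le_min (by linarith) (by linarith)
  have ha' : a ≤ exp ε₂ * a := le_mul_of_one_le_left ha (one_le_exp hε₂)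
  have hd' : exp (δ - δhat) * d ≤ exp ε₂ * d := by gcongr
  have hb' : exp δ * b ≤ exp (min δ δhat + ε₂) * b := by
    gcongr
    linarith
  have hc' : exp (-δhat) * c ≤ exp (min δ δhat + ε₂) * c := by
    gcongr
    linarith [le_min hδ hδhat]
  have hgap : exp ε₂ ≤ exp (min δ δhat + ε₂) := by
    gcongr
    linarith [le_min hδ hδhat]
  have hmix : exp ε₂ * (a + d) + exp (min δ δhat + ε₂) * (b + c)
      ≤ exp ε₂ * (1 - ε₁) + exp (min δ δhat + ε₂) * ε₁ := by
    rw [show a + d = 1 - (b + c) by linarith]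
    linarith [mul_le_mul_of_nonneg_left hmis (sub_nonneg.mpr hgap)]
  unfold watermarkNormalizer
  linarith

end bounds

/-- Bound on the same-list multiplicative deviation by `f₁(ε₁, ε₂)`. -/
theorem same_list_deviation_bound
    {V : Type*} [Fintype V] [DecidableEq V]
    (P : V → ℝ) (G Ghat : Finset V) (δ δhat : ℝ)
    (hP0 : ∀ t, 0 ≤ P t) (hP1 : ∑ t, P t = 1) (hδ : 0 < δ) (hδhat : 0 < δhat)
    (A : ℝ)
    (hA : A = ∑ t ∈ Ghatᶜ ∩ Gᶜ, P t + Real.exp δ * ∑ t ∈ Ghatᶜ ∩ G, P t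
        + Real.exp (-δhat) * ∑ t ∈ Ghat ∩ Gᶜ, P t
        + Real.exp (δ - δhat) * ∑ t ∈ Ghat ∩ G, P t)
    (ε₁ ε₂ : ℝ) (hε₁0 : 0 ≤ ε₁) (hε₁1 : ε₁ < 1) (hε₂0 : 0 ≤ ε₂)
    (hmis : ∑ t ∈ Ghatᶜ ∩ G, P t + ∑ t ∈ Ghat ∩ Gᶜ, P t ≤ ε₁)
    (hδδ : |δ - δhat| ≤ ε₂) :
    max |1 / A - 1| |Real.exp (δ - δhat) / A - 1|
      ≤ max (Real.exp (2 * ε₂) / (1 - ε₁) - 1)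
          (1 - Real.exp (-(2 * ε₂)) / ((1 - ε₁) + ε₁ * Real.exp (δ - ε₂))) := by
  set a := ∑ t ∈ Ghatᶜ ∩ Gᶜ, P t
  set b := ∑ t ∈ Ghatᶜ ∩ G, P t
  set c := ∑ t ∈ Ghat ∩ Gᶜ, P t
  set d := ∑ t ∈ Ghat ∩ G, P t
  have hsum : a + b + c + d = 1 := (sum_compl_inter_add_sum_inter Ghat G P).trans hP1
  have hP (s : Finset V) : 0 ≤ ∑ t ∈ s, P t := sum_nonneg fun t _ ↦ hP0 t
  have hdev : |δhat - δ| ≤ ε₂ := by rwa [abs_sub_comm]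
  have hA' : A = watermarkNormalizer δ δhat a b c d := hA
  have hAr : A / exp (δ - δhat) = watermarkNormalizer δhat δ d b c a := by
    rw [hA', watermarkNormalizer_div_exp]
  have hbound (B : ℝ) :=
    abs_one_div_sub_one_le_of_exp_bounds (B := B) hε₁0 hε₁1 hε₂0 (min_le_left δ δhat)
  refine max_le ?_ ?_
  · rw [hA']
    exact hbound _
      (exp_neg_mul_le_watermarkNormalizer (hP _) (hP _) (hP _) (hP _) hsum hmis hδδ)
      (watermarkNormalizer_le (hP _) (hP _) (hP _) (hP _) hsum hmis hδδ hδ.le hδhat.le)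
  · rw [← one_div_div A, hAr]
    have hsum' : d + b + c + a = 1 := by linarith
    exact hbound _
      (exp_neg_mul_le_watermarkNormalizer (hP _) (hP _) (hP _) (hP _) hsum' hmis hdev)
      (min_comm δ δhat ▸
        watermarkNormalizer_le (hP _) (hP _) (hP _) (hP _) hsum' hmis hdev hδhat.le hδ.le)
end

section
/- The total variation distance between the post-removal distribution and the original distribution decomposes exactly as TV(P_R, P) = |1/A − 1|·Σ_{t∈R̂∩R} P(t) + |e^{δ−δ̂}/A − 1|·Σ_{t∈Ĝ∩G} P(t) + |e^{δ}/A − 1|·Σ_{t∈R̂∩G} P(t) + |e^{−δ̂}/A − 1|·Σ_{t∈Ĝ∩R} P(t). -/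
/-!
Watermarking and its removal are both exponential tilts: `P` is reweighted by a positive
weight `w` and renormalised. A tilt of a tilt is the tilt by the product of the weights, and
the normaliser of the composite is `Z * Ẑ = A`. Hence `P_R t - P t = (w t / A - 1) * P t`, and
the product weight is constant on each of the four cells `R̂ ∩ R`, `R̂ ∩ G`, `Ĝ ∩ R`, `Ĝ ∩ G`,
with the values `1`, `e^δ`, `e^(-δ̂)`, `e^(δ-δ̂)`.
-/

open Finset

theorem exp_mul_ite (c : ℝ) (p : Prop) [Decidable p] :
    Real.exp (c * if p then 1 else 0) = if p then Real.exp c else 1 := by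
  split_ifs <;> simp

section Tilt

variable {V : Type*} [Fintype V]

noncomputable def tilt (w P : V → ℝ) (t : V) : ℝ :=
  w t * P t / ∑ s, w s * P s

theorem tilt_tilt {u v P : V → ℝ} (hu : ∑ s, u s * P s ≠ 0) :
    tilt v (tilt u P) = tilt (v * u) P := by
  funext t
  have hsum : ∑ s, v s * (u s * P s / ∑ r, u r * P r)
      = (∑ s, (v * u) s * P s) / ∑ r, u r * P r := by
    rw [Finset.sum_div]
    exact Finset.sum_congr rfl fun s _ => by simp only [Pi.mul_apply]; ring
  simp only [tilt]
  rw [hsum, ← mul_div_assoc, div_div_div_cancel_right₀ hu, Pi.mul_apply, mul_assoc]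

theorem sum_abs_tilt_sub {w P : V → ℝ} (hP : ∀ t, 0 ≤ P t) :
    ∑ t, |tilt w P t - P t| = ∑ t, |w t / ∑ s, w s * P s - 1| * P t := by
  refine Finset.sum_congr rfl fun t _ => ?_
  rw [tilt, mul_div_right_comm, ← sub_one_mul, abs_mul, abs_of_nonneg (hP t)]

theorem sum_mul_pos {w P : V → ℝ} (hw : ∀ t, 0 < w t) (hP0 : ∀ t, 0 ≤ P t)
    (hP : ∑ t, P t ≠ 0) : 0 < ∑ t, w t * P t := by
  obtain ⟨t, -, ht⟩ := Finset.exists_ne_zero_of_sum_ne_zero hP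
  exact Finset.sum_pos' (fun s _ => mul_nonneg (hw s).le (hP0 s))
    ⟨t, Finset.mem_univ t, mul_pos (hw t) ((hP0 t).lt_of_ne' ht)⟩

variable [DecidableEq V]

theorem sum_ite_mem_mul (s : Finset V) (a b : ℝ) (f : V → ℝ) :
    ∑ t, (if t ∈ s then a else b) * f t = b * ∑ t ∈ sᶜ, f t + a * ∑ t ∈ s, f t := by
  simp only [ite_mul, sum_ite, filter_mem_eq_inter, filter_notMem_eq_sdiff, sdiff_eq_inter_compl,
    univ_inter, mul_sum]
  ring

theorem sum_ite_mem_ite_mem_mul (H G : Finset V) (a b c d : ℝ) (f : V → ℝ) :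
    ∑ t, (if t ∈ H then (if t ∈ G then a else b) else (if t ∈ G then c else d)) * f t
      = d * ∑ t ∈ Hᶜ ∩ Gᶜ, f t + c * ∑ t ∈ Hᶜ ∩ G, f t
        + b * ∑ t ∈ H ∩ Gᶜ, f t + a * ∑ t ∈ H ∩ G, f t := by
  simp only [ite_mul, sum_ite, filter_mem_eq_inter, filter_notMem_eq_sdiff, sdiff_eq_inter_compl,
    univ_inter, mul_sum]
  ring

end Tilt

theorem tv_decomposition_general
    {V : Type*} [Fintype V] [DecidableEq V]
    (P : V → ℝ) (G Ghat : Finset V) (δ δhat : ℝ)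
    (hP0 : ∀ t, 0 ≤ P t) (hP1 : ∑ t, P t = 1)
    (Z Zhat A : ℝ) (PW PR : V → ℝ)
    (hZ : Z = ∑ t ∈ Gᶜ, P t + Real.exp δ * ∑ t ∈ G, P t)
    (hPW : ∀ t, PW t = Real.exp (δ * (if t ∈ G then 1 else 0)) * P t / Z)
    (hZhat : Zhat = ∑ t ∈ Ghatᶜ, PW t + Real.exp (-δhat) * ∑ t ∈ Ghat, PW t)
    (hPR : ∀ t, PR t = Real.exp (-(δhat * (if t ∈ Ghat then 1 else 0))) * PW t / Zhat)
    (hA : A = ∑ t ∈ Ghatᶜ ∩ Gᶜ, P t + Real.exp δ * ∑ t ∈ Ghatᶜ ∩ G, P t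
        + Real.exp (-δhat) * ∑ t ∈ Ghat ∩ Gᶜ, P t
        + Real.exp (δ - δhat) * ∑ t ∈ Ghat ∩ G, P t) :
    ∑ t, |PR t - P t|
      = |1 / A - 1| * ∑ t ∈ Ghatᶜ ∩ Gᶜ, P t
        + |Real.exp (δ - δhat) / A - 1| * ∑ t ∈ Ghat ∩ G, P t
        + |Real.exp δ / A - 1| * ∑ t ∈ Ghatᶜ ∩ G, P t
        + |Real.exp (-δhat) / A - 1| * ∑ t ∈ Ghat ∩ Gᶜ, P t := by
  set wG : V → ℝ := fun t => Real.exp (δ * if t ∈ G then 1 else 0)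
  set wH : V → ℝ := fun t => Real.exp (-δhat * if t ∈ Ghat then 1 else 0)
  have hPW' : PW = tilt wG P := by
    have hZ' : Z = ∑ t, wG t * P t := by simp only [wG, exp_mul_ite, sum_ite_mem_mul, one_mul, hZ]
    exact funext fun t => by rw [hPW, tilt, ← hZ']
  have hPR' : PR = tilt wH PW := by
    have hZhat' : Zhat = ∑ t, wH t * PW t := by
      simp only [wH, exp_mul_ite, sum_ite_mem_mul, one_mul, hZhat]
    exact funext fun t => by rw [hPR, tilt, ← hZhat', ← neg_mul]
  have hw : ∀ t, (wH * wG) t = if t ∈ Ghat then (if t ∈ G then Real.exp (δ - δhat) else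
      Real.exp (-δhat)) else (if t ∈ G then Real.exp δ else 1) := by
    intro t
    simp only [Pi.mul_apply, wH, wG, exp_mul_ite]
    split_ifs <;> simp [sub_eq_neg_add, Real.exp_add]
  have hA' : A = ∑ t, (wH * wG) t * P t := by
    simp only [hw, sum_ite_mem_ite_mem_mul, one_mul, hA]
  have hZ_pos : 0 < ∑ t, wG t * P t :=
    sum_mul_pos (fun t => Real.exp_pos _) hP0 (hP1 ▸ one_ne_zero)
  rw [hPR', hPW', tilt_tilt hZ_pos.ne', sum_abs_tilt_sub hP0, ← hA']
  simp only [hw, apply_ite (fun x => |x / A - 1|), sum_ite_mem_ite_mem_mul]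
  ring

/-- Exact decomposition of the total variation distance between the
post-removal distribution and the original distribution. -/
theorem tv_decomposition
    {V : Type*} [Fintype V] [DecidableEq V]
    (P : V → ℝ) (G Ghat : Finset V) (δ δhat : ℝ)
    (hP0 : ∀ t, 0 ≤ P t) (hP1 : ∑ t, P t = 1) (hδ : 0 < δ) (hδhat : 0 < δhat)
    (Z Zhat A : ℝ) (PW PR : V → ℝ)
    (hZ : Z = ∑ t ∈ Gᶜ, P t + Real.exp δ * ∑ t ∈ G, P t)
    (hPW : ∀ t, PW t = Real.exp (δ * (if t ∈ G then 1 else 0)) * P t / Z)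
    (hZhat : Zhat = ∑ t ∈ Ghatᶜ, PW t + Real.exp (-δhat) * ∑ t ∈ Ghat, PW t)
    (hPR : ∀ t, PR t = Real.exp (-(δhat * (if t ∈ Ghat then 1 else 0))) * PW t / Zhat)
    (hA : A = ∑ t ∈ Ghatᶜ ∩ Gᶜ, P t + Real.exp δ * ∑ t ∈ Ghatᶜ ∩ G, P t
        + Real.exp (-δhat) * ∑ t ∈ Ghat ∩ Gᶜ, P t
        + Real.exp (δ - δhat) * ∑ t ∈ Ghat ∩ G, P t) :
    ∑ t, |PR t - P t|
      = |1 / A - 1| * ∑ t ∈ Ghatᶜ ∩ Gᶜ, P t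
        + |Real.exp (δ - δhat) / A - 1| * ∑ t ∈ Ghat ∩ G, P t
        + |Real.exp δ / A - 1| * ∑ t ∈ Ghatᶜ ∩ G, P t
        + |Real.exp (-δhat) / A - 1| * ∑ t ∈ Ghat ∩ Gᶜ, P t :=
  tv_decomposition_general P G Ghat δ δhat hP0 hP1 Z Zhat A PW PR hZ hPW hZhat hPR hA
end

section
/- Assume the misclassified probability mass satisfies Σ_{t∈R̂∩G} P(t) + Σ_{t∈Ĝ∩R} P(t) ≤ ε₁ with 0 ≤ ε₁ < 1, and |δ − δ̂| ≤ ε₂ with ε₂ ≥ 0. Then the total variation distance between the post-removal distribution P_R (with removal strength η = 1) and the original distribution P satisfies TV(P_R, P) ≤ ε₁·f₂(ε₁, ε₂) + (1 − ε₁)·f₁(ε₁, ε₂). -/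
open Finset


lemma two_le_exp_add_exp_neg (x : ℝ) : 2 ≤ Real.exp x + Real.exp (-x) := by
  have h := Real.exp_pos x
  rw [Real.exp_neg]
  have h2 : (Real.exp x)⁻¹ * Real.exp x = 1 := inv_mul_cancel₀ h.ne'
  nlinarith [sq_nonneg (Real.exp x - 1), inv_nonneg.mpr h.le]

lemma pertok {c S a b u v X Y : ℝ} (hX : 0 < X) (hY : 0 < Y)
    (h1 : Real.exp a ≤ c) (h2 : c ≤ Real.exp b)
    (h3 : Real.exp u * X ≤ S) (h4 : S ≤ Real.exp v * Y) :
    |c / S - 1| ≤ max (Real.exp (b - u) / X - 1) (1 - Real.exp (a - v) / Y) := by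
  have hS : 0 < S := lt_of_lt_of_le (by positivity) h3
  rw [abs_sub_le_iff]
  constructor
  · have hcs : c / S ≤ Real.exp (b - u) / X := by
      rw [Real.exp_sub, div_div]
      exact div_le_div₀ (Real.exp_pos b).le h2 (by positivity) h3
    exact le_trans (by linarith) (le_max_left _ _)
  · have hcs : Real.exp (a - v) / Y ≤ c / S := by
      rw [Real.exp_sub, div_div]
      exact div_le_div₀ (le_trans (Real.exp_pos a).le h1) h1 hS h4
    exact le_trans (by linarith) (le_max_right _ _)

set_option maxHeartbeats 1000000 in
/-- Main watermark-removal bound: the total variation distance between the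
post-removal distribution and the original one is at most
`ε₁·f₂(ε₁,ε₂) + (1-ε₁)·f₁(ε₁,ε₂)`. -/
theorem tv_post_removal_bound
    {V : Type*} [Fintype V] [DecidableEq V]
    (P : V → ℝ) (G Ghat : Finset V) (δ δhat : ℝ)
    (hP0 : ∀ t, 0 ≤ P t) (hP1 : ∑ t, P t = 1) (hδ : 0 < δ) (hδhat : 0 < δhat)
    (Z Zhat : ℝ) (PW PR : V → ℝ)
    (hZ : Z = ∑ t ∈ Gᶜ, P t + Real.exp δ * ∑ t ∈ G, P t)
    (hPW : ∀ t, PW t = Real.exp (δ * (if t ∈ G then 1 else 0)) * P t / Z)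
    (hZhat : Zhat = ∑ t ∈ Ghatᶜ, PW t + Real.exp (-δhat) * ∑ t ∈ Ghat, PW t)
    (hPR : ∀ t, PR t = Real.exp (-(δhat * (if t ∈ Ghat then 1 else 0))) * PW t / Zhat)
    (ε₁ ε₂ : ℝ) (hε₁0 : 0 ≤ ε₁) (hε₁1 : ε₁ < 1) (hε₂0 : 0 ≤ ε₂)
    (hmis : ∑ t ∈ Ghatᶜ ∩ G, P t + ∑ t ∈ Ghat ∩ Gᶜ, P t ≤ ε₁)
    (hδδ : |δ - δhat| ≤ ε₂) :
    ∑ t, |PR t - P t|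
      ≤ ε₁ * max (Real.exp (δ + 2 * ε₂) / (1 - ε₁) - 1)
            (1 - Real.exp (-(δ + 2 * ε₂)) / ((1 - ε₁) + ε₁ * Real.exp (δ - ε₂)))
        + (1 - ε₁) * max (Real.exp (2 * ε₂) / (1 - ε₁) - 1)
            (1 - Real.exp (-(2 * ε₂)) / ((1 - ε₁) + ε₁ * Real.exp (δ - ε₂))) := by
  have hε₁' : 0 < 1 - ε₁ := by linarith
  set D : ℝ := (1 - ε₁) + ε₁ * Real.exp (δ - ε₂) with hD
  have hDpos : 0 < D := by
    have : 0 ≤ ε₁ * Real.exp (δ - ε₂) := by positivity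
    rw [hD]; linarith
  set F₁ : ℝ := max (Real.exp (2 * ε₂) / (1 - ε₁) - 1)
      (1 - Real.exp (-(2 * ε₂)) / D) with hF₁
  set F₂ : ℝ := max (Real.exp (δ + 2 * ε₂) / (1 - ε₁) - 1)
      (1 - Real.exp (-(δ + 2 * ε₂)) / D) with hF₂
  -- misclassified set
  set M : Finset V := (Ghatᶜ ∩ G) ∪ (Ghat ∩ Gᶜ) with hMdef
  have hMmem : ∀ t : V, t ∈ M ↔ ¬ ((t ∈ G) ↔ (t ∈ Ghat)) := by
    intro t
    simp only [hMdef, Finset.mem_union, Finset.mem_inter, Finset.mem_compl]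
    tauto
  set m : ℝ := ∑ t ∈ M, P t with hm
  have hm_le : m ≤ ε₁ := by
    have hdisj : Disjoint (Ghatᶜ ∩ G) (Ghat ∩ Gᶜ) := by
      refine Finset.disjoint_left.mpr ?_
      intro a ha hb
      simp only [Finset.mem_inter, Finset.mem_compl] at ha hb
      exact ha.1 hb.1
    rw [hm, hMdef, Finset.sum_union hdisj]
    exact hmis
  have hm0 : 0 ≤ m := Finset.sum_nonneg fun t _ => hP0 t
  have hmc : ∑ t ∈ Mᶜ, P t = 1 - m := by
    have h := Finset.sum_add_sum_compl M P
    rw [hP1] at h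
    linarith
  -- the pointwise ratio
  set c : V → ℝ := fun t =>
      Real.exp (δ * (if t ∈ G then 1 else 0) - δhat * (if t ∈ Ghat then 1 else 0)) with hc
  set S : ℝ := ∑ t, c t * P t with hSdef
  have hδδ1 : δ - δhat ≤ ε₂ := (abs_le.mp hδδ).2
  have hδδ2 : -ε₂ ≤ δ - δhat := (abs_le.mp hδδ).1
  have hcpos : ∀ t, 0 < c t := fun t => Real.exp_pos _
  have hc_lo : ∀ t, t ∉ M → Real.exp (-ε₂) ≤ c t ∧ c t ≤ Real.exp ε₂ := by
    intro t ht
    simp only [hMmem, not_not] at ht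
    by_cases hg : t ∈ G
    · have hgh : t ∈ Ghat := ht.mp hg
      simp only [hc, hg, hgh, if_pos, mul_one]
      exact ⟨Real.exp_le_exp.mpr (by linarith), Real.exp_le_exp.mpr (by linarith)⟩
    · have hgh : t ∉ Ghat := fun h => hg (ht.mpr h)
      simp only [hc, hg, hgh, if_neg, not_false_iff, mul_zero, sub_zero, Real.exp_zero]
      constructor
      · calc Real.exp (-ε₂) ≤ Real.exp 0 := Real.exp_le_exp.mpr (by linarith)
          _ = 1 := Real.exp_zero
      · calc (1:ℝ) = Real.exp 0 := Real.exp_zero.symm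
          _ ≤ Real.exp ε₂ := Real.exp_le_exp.mpr hε₂0
  have hc_mis : ∀ t, t ∈ M → Real.exp (-(δ + ε₂)) ≤ c t ∧ c t ≤ Real.exp δ := by
    intro t ht
    rw [hMmem] at ht
    by_cases hg : t ∈ G
    · have hgh : t ∉ Ghat := fun h => ht ⟨fun _ => h, fun _ => hg⟩
      simp only [hc, hg, hgh, if_pos, if_neg, not_false_iff, mul_one, mul_zero, sub_zero]
      exact ⟨Real.exp_le_exp.mpr (by linarith), le_refl _⟩
    · have hgh : t ∈ Ghat := by
        by_contra h
        exact ht ⟨fun h' => absurd h' hg, fun h' => absurd h' h⟩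
      simp only [hc, hg, hgh, if_neg, not_false_iff, if_pos, mul_zero, mul_one, zero_sub]
      exact ⟨Real.exp_le_exp.mpr (by linarith), Real.exp_le_exp.mpr (by linarith)⟩
  -- bounds on S
  have hSsplit : S = ∑ t ∈ M, c t * P t + ∑ t ∈ Mᶜ, c t * P t :=
    (Finset.sum_add_sum_compl M _).symm
  have hMnn : 0 ≤ ∑ t ∈ M, c t * P t :=
    Finset.sum_nonneg fun t _ => mul_nonneg (hcpos t).le (hP0 t)
  have hMclo : Real.exp (-ε₂) * (1 - m) ≤ ∑ t ∈ Mᶜ, c t * P t := by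
    rw [← hmc, Finset.mul_sum]
    exact Finset.sum_le_sum fun t ht =>
      mul_le_mul_of_nonneg_right (hc_lo t (Finset.mem_compl.mp ht)).1 (hP0 t)
  have hMchi : ∑ t ∈ Mᶜ, c t * P t ≤ Real.exp ε₂ * (1 - m) := by
    rw [← hmc, Finset.mul_sum]
    exact Finset.sum_le_sum fun t ht =>
      mul_le_mul_of_nonneg_right (hc_lo t (Finset.mem_compl.mp ht)).2 (hP0 t)
  have hMhi : ∑ t ∈ M, c t * P t ≤ Real.exp δ * m := by
    rw [hm, Finset.mul_sum]
    exact Finset.sum_le_sum fun t ht =>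
      mul_le_mul_of_nonneg_right (hc_mis t ht).2 (hP0 t)
  have hSlo : Real.exp (-ε₂) * (1 - ε₁) ≤ S := by
    have h1 : Real.exp (-ε₂) * (1 - ε₁) ≤ Real.exp (-ε₂) * (1 - m) := by
      have := (Real.exp_pos (-ε₂)).le
      nlinarith
    linarith [hSsplit ▸ (by linarith [hMnn, hMclo] : Real.exp (-ε₂) * (1 - m) ≤ S)]
  have hSpos : 0 < S := lt_of_lt_of_le (by positivity) hSlo
  have hShi : S ≤ Real.exp ε₂ * (1 - m) + Real.exp δ * m := by
    rw [hSsplit]; linarith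
  -- identify S with Z * Zhat
  have hZ1 : (1:ℝ) ≤ Z := by
    have hGnn : 0 ≤ ∑ t ∈ G, P t := Finset.sum_nonneg fun t _ => hP0 t
    have h1 : ∑ t ∈ G, P t ≤ Real.exp δ * ∑ t ∈ G, P t := by
      nlinarith [Real.one_le_exp hδ.le]
    have h2 := Finset.sum_add_sum_compl G P
    rw [hP1] at h2
    rw [hZ]; linarith
  have hZ0 : Z ≠ 0 := by linarith
  have hZPW : ∀ t, Z * PW t = Real.exp (δ * (if t ∈ G then 1 else 0)) * P t := by
    intro t; rw [hPW]; field_simp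
  have hZZ : Z * Zhat = S := by
    have hA : ∀ t ∈ Ghatᶜ, Z * PW t = c t * P t := by
      intro t ht
      rw [hZPW]
      simp only [hc, Finset.mem_compl.mp ht, if_neg, not_false_iff, mul_zero, sub_zero]
    have hB : ∀ t ∈ Ghat, Real.exp (-δhat) * (Z * PW t) = c t * P t := by
      intro t ht
      rw [hZPW]
      simp only [hc, ht, if_pos, mul_one]
      rw [← mul_assoc, ← Real.exp_add]
      congr 2
      ring
    calc Z * Zhat
        = ∑ t ∈ Ghatᶜ, Z * PW t + ∑ t ∈ Ghat, Real.exp (-δhat) * (Z * PW t) := by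
          rw [hZhat]
          rw [mul_add, Finset.mul_sum, Finset.mul_sum, Finset.mul_sum]
          congr 1
          exact Finset.sum_congr rfl fun t _ => by ring
      _ = ∑ t ∈ Ghatᶜ, c t * P t + ∑ t ∈ Ghat, c t * P t := by
          rw [Finset.sum_congr rfl hA, Finset.sum_congr rfl hB]
      _ = S := by
          rw [hSdef, ← Finset.sum_add_sum_compl Ghat (fun t => c t * P t), add_comm]
  have hZhat0 : Zhat ≠ 0 := by
    intro h
    rw [h, mul_zero] at hZZ
    exact hSpos.ne' hZZ.symm
  have hPRt : ∀ t, PR t = c t * P t / S := by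
    intro t
    have hct : c t = Real.exp (-(δhat * (if t ∈ Ghat then 1 else 0))) *
        Real.exp (δ * (if t ∈ G then 1 else 0)) := by
      simp only [hc]
      rw [← Real.exp_add]
      congr 1
      ring
    rw [hPR, hPW, ← hZZ, hct]
    field_simp
  have key : ∀ t, |PR t - P t| = P t * |c t / S - 1| := by
    intro t
    rw [hPRt t]
    have h : c t * P t / S - P t = P t * (c t / S - 1) := by ring
    rw [h, abs_mul, abs_of_nonneg (hP0 t)]
  -- F₁ ≤ F₂
  have hF12 : F₁ ≤ F₂ := by
    apply max_le_max
    · have h : Real.exp (2 * ε₂) ≤ Real.exp (δ + 2 * ε₂) := Real.exp_le_exp.mpr (by linarith)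
      gcongr
    · have h : Real.exp (-(δ + 2 * ε₂)) ≤ Real.exp (-(2 * ε₂)) := Real.exp_le_exp.mpr (by linarith)
      gcongr
  -- per-token bounds
  have hbound₁ : ∀ t, t ∉ M → |c t / S - 1| ≤ F₁ := by
    intro t ht
    obtain ⟨hl, hh⟩ := hc_lo t ht
    rcases le_or_gt ε₂ δ with hcase | hcase
    · -- S ≤ exp ε₂ * D
      have hShiA : S ≤ Real.exp ε₂ * D := by
        have he : Real.exp ε₂ * D = (1 - ε₁) * Real.exp ε₂ + ε₁ * Real.exp δ := by
          rw [hD, mul_add, ← mul_assoc, mul_comm (Real.exp ε₂) ε₁, mul_assoc, ← Real.exp_add]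
          ring_nf
        have hee : Real.exp ε₂ ≤ Real.exp δ := Real.exp_le_exp.mpr hcase
        nlinarith [hShi]
      have hkey := pertok hε₁' hDpos hl hh hSlo hShiA
      rw [show ε₂ - -ε₂ = 2 * ε₂ by ring, show -ε₂ - ε₂ = -(2 * ε₂) by ring] at hkey
      exact hkey.trans_eq hF₁.symm
    · -- S ≤ exp ε₂ * 1
      have hShiB : S ≤ Real.exp ε₂ * 1 := by
        have hee : Real.exp δ ≤ Real.exp ε₂ := Real.exp_le_exp.mpr hcase.le
        nlinarith [hShi]
      have hkey := pertok hε₁' one_pos hl hh hSlo hShiB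
      rw [show ε₂ - -ε₂ = 2 * ε₂ by ring, show -ε₂ - ε₂ = -(2 * ε₂) by ring] at hkey
      refine hkey.trans (le_trans (max_le le_rfl ?_) (le_max_left _ _))
      -- 1 - exp(-(2ε₂))/1 ≤ exp(2ε₂)/(1-ε₁) - 1
      have h2 := two_le_exp_add_exp_neg (2 * ε₂)
      have h3 : Real.exp (2 * ε₂) ≤ Real.exp (2 * ε₂) / (1 - ε₁) := by
        rw [le_div_iff₀ hε₁']
        nlinarith [Real.exp_pos (2 * ε₂)]
      rw [div_one]
      linarith
  have hbound₂ : ∀ t, t ∈ M → |c t / S - 1| ≤ F₂ := by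
    intro t ht
    obtain ⟨hl, hh⟩ := hc_mis t ht
    rcases le_or_gt ε₂ δ with hcase | hcase
    · have hShiA : S ≤ Real.exp ε₂ * D := by
        have he : Real.exp ε₂ * D = (1 - ε₁) * Real.exp ε₂ + ε₁ * Real.exp δ := by
          rw [hD, mul_add, ← mul_assoc, mul_comm (Real.exp ε₂) ε₁, mul_assoc, ← Real.exp_add]
          ring_nf
        have hee : Real.exp ε₂ ≤ Real.exp δ := Real.exp_le_exp.mpr hcase
        nlinarith [hShi]
      have hkey := pertok hε₁' hDpos hl hh hSlo hShiA
      rw [show -(δ + ε₂) - ε₂ = -(δ + 2 * ε₂) by ring] at hkey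
      refine hkey.trans (max_le_max ?_ le_rfl)
      have h : Real.exp (δ - -ε₂) ≤ Real.exp (δ + 2 * ε₂) := Real.exp_le_exp.mpr (by linarith)
      gcongr
    · have hShiB : S ≤ Real.exp ε₂ * 1 := by
        have hee : Real.exp δ ≤ Real.exp ε₂ := Real.exp_le_exp.mpr hcase.le
        nlinarith [hShi]
      have hkey := pertok hε₁' one_pos hl hh hSlo hShiB
      rw [show -(δ + ε₂) - ε₂ = -(δ + 2 * ε₂) by ring] at hkey
      refine hkey.trans (le_trans (max_le ?_ ?_) (le_max_left _ _))
      · have h : Real.exp (δ - -ε₂) ≤ Real.exp (δ + 2 * ε₂) := Real.exp_le_exp.mpr (by linarith)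
        gcongr
      · have h2 := two_le_exp_add_exp_neg (δ + 2 * ε₂)
        have h3 : Real.exp (δ + 2 * ε₂) ≤ Real.exp (δ + 2 * ε₂) / (1 - ε₁) := by
          rw [le_div_iff₀ hε₁']
          nlinarith [Real.exp_pos (δ + 2 * ε₂)]
        rw [div_one]
        linarith
  -- put everything together
  calc ∑ t, |PR t - P t|
      = ∑ t, P t * |c t / S - 1| := Finset.sum_congr rfl fun t _ => key t
    _ = ∑ t ∈ M, P t * |c t / S - 1| + ∑ t ∈ Mᶜ, P t * |c t / S - 1| :=
        (Finset.sum_add_sum_compl M _).symm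
    _ ≤ ∑ t ∈ M, P t * F₂ + ∑ t ∈ Mᶜ, P t * F₁ := by
        apply add_le_add
        · exact Finset.sum_le_sum fun t ht =>
            mul_le_mul_of_nonneg_left (hbound₂ t ht) (hP0 t)
        · exact Finset.sum_le_sum fun t ht =>
            mul_le_mul_of_nonneg_left (hbound₁ t (Finset.mem_compl.mp ht)) (hP0 t)
    _ = m * F₂ + (1 - m) * F₁ := by
        rw [← Finset.sum_mul, ← Finset.sum_mul, hmc, hm]
    _ ≤ ε₁ * F₂ + (1 - ε₁) * F₁ := by nlinarith [sub_nonneg.mpr hm_le, sub_nonneg.mpr hF12]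
end
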